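/- Let W : ℝ → ℝ be a C¹, 1-periodic, even function with Lipschitz derivative, ‖W'‖_∞ = 1 and zero average, let γ > 0, T > 0, and (a_n) an N-periodic sequence of positive reals. Let τ_k → 0, ε_k = γτ_k, and for each k let (u_n^k) solve the perturbed scheme u_n^k ∈ argmin_{u∈ℝ} {ε_k W(u/ε_k) + Tu + a_n(u − u_{n−1}^k)²/(2τ_k)} (with unique minimizers) and initial data u_0^k → u_0. If for every t ≥ 0 the interpolations u^k(t) = u^k_{⌈t/τ_k⌉} converge to a limit u(t), then u(t) = u_0 − γ f_γ(T,(a_n)) t for all t ≥ 0. -/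

import Mathlib

open Filter

/-- `(y n)` is a solution of the rescaled scheme: at each step `n ≥ 1`, `y n` is
the unique minimizer over `ℝ` of `t ↦ W t + T t + a_n (γ/2)(t - y_{n-1})²`. -/
def IsRescaledSol (W : ℝ → ℝ) (T γ : ℝ) (a : ℕ → ℝ) (y : ℕ → ℝ) : Prop :=
  ∀ n : ℕ, 1 ≤ n →
    (∀ t : ℝ, W (y n) + T * y n + a n * (γ / 2) * (y n - y (n - 1)) ^ 2 ≤
      W t + T * t + a n * (γ / 2) * (t - y (n - 1)) ^ 2) ∧
    (∀ t : ℝ, (∀ s : ℝ, W t + T * t + a n * (γ / 2) * (t - y (n - 1)) ^ 2 ≤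
      W s + T * s + a n * (γ / 2) * (s - y (n - 1)) ^ 2) → t = y n)

/-! Dividing by `ε_k = γ τ_k` turns each discrete solution `u^k` into a solution `y^k` of the
rescaled scheme. As `W` is `1`-periodic, integer translates of rescaled solutions are again
solutions, and the scheme preserves order (the minimizer of `t ↦ F t + c (t - p)²` is monotone
in `p`). Trapping one solution between two consecutive integer translates of another shows that
the displacements `y₀ - y_n` of any two solutions differ by at most `1`, so `(y₀ - y_n) / n → f_γ`
uniformly over all solutions. With `n = ⌈t / τ_k⌉₊`,
`u^k_n = u^k_0 - γ (τ_k n) (y^k_0 - y^k_n) / n → u₀ - γ t f_γ`. -/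

open Topology

theorem le_of_minimizes_add_sq {F : ℝ → ℝ} {c p p' t t' : ℝ} (hc : 0 < c) (hp : p ≤ p')
    (ht : ∀ s, F t + c * (t - p) ^ 2 ≤ F s + c * (s - p) ^ 2)
    (ht_uniq : ∀ s, (∀ r, F s + c * (s - p) ^ 2 ≤ F r + c * (r - p) ^ 2) → s = t)
    (ht' : ∀ s, F t' + c * (t' - p') ^ 2 ≤ F s + c * (s - p') ^ 2) : t ≤ t' := by
  by_contra! hlt
  -- adding the two minimality inequalities, the terms `F t`, `F t'` cancel
  have hsum : c * ((t - t') * (p' - p)) ≤ 0 := by nlinarith [ht t', ht' t]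
  have hpp' : p = p' := by nlinarith [mul_pos hc (sub_pos.2 hlt)]
  subst hpp'
  exact hlt.ne (ht_uniq t' ht')

theorem forall_le_iff_of_eq_mul_comp_div {E G : ℝ → ℝ} {ε : ℝ} (hε : 0 < ε)
    (hEG : ∀ x, E x = ε * G (x / ε)) (x : ℝ) :
    (∀ v, E x ≤ E v) ↔ ∀ s, G (x / ε) ≤ G s := by
  simp only [hEG]
  refine ⟨fun h s => ?_, fun h v => mul_le_mul_of_nonneg_left (h _) hε.le⟩
  have := h (ε * s)
  rwa [mul_div_cancel_left₀ _ hε.ne', mul_le_mul_iff_right₀ hε] at this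

namespace IsRescaledSol

variable {W : ℝ → ℝ} {T γ : ℝ} {a : ℕ → ℝ} {y z : ℕ → ℝ}

theorem add_int (hWper : Function.Periodic W 1) (hy : IsRescaledSol W T γ a y) (m : ℤ) :
    IsRescaledSol W T γ a (fun n => y n + m) := by
  have hW : ∀ s : ℝ, W (s + m) = W s := fun s => by simpa using hWper.int_mul m s
  have hW' : ∀ s : ℝ, W (s - m) = W s := fun s => by simpa using hWper.sub_int_mul_eq m (x := s)
  intro n hn
  obtain ⟨hmin, huniq⟩ := hy n hn
  have hsq : ∀ s : ℝ, (s - (y (n - 1) + m)) ^ 2 = (s - m - y (n - 1)) ^ 2 := fun s => by ring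
  refine ⟨fun t => ?_, fun t ht => ?_⟩
  · have := hmin (t - m)
    simp only [hW, hsq, add_sub_add_right_eq_sub]
    rw [hW'] at this
    linarith
  · have := huniq (t - m) fun s => by
      have := ht (s + m)
      simp only [hW, hsq, add_sub_cancel_right] at this
      rw [hW']
      linarith
    linarith

theorem le_of_initial_le (hγ : 0 < γ) (ha : ∀ n, 0 < a n) (hy : IsRescaledSol W T γ a y)
    (hz : IsRescaledSol W T γ a z) (h0 : y 0 ≤ z 0) : ∀ n, y n ≤ z n
  | 0 => h0
  | n + 1 =>
    le_of_minimizes_add_sq (F := fun s => W s + T * s) (mul_pos (ha _) (half_pos hγ))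
      (le_of_initial_le hγ ha hy hz h0 n) (hy (n + 1) n.succ_pos).1
      (hy (n + 1) n.succ_pos).2 (hz (n + 1) n.succ_pos).1

theorem abs_sub_sub_le_one (hWper : Function.Periodic W 1) (hγ : 0 < γ) (ha : ∀ n, 0 < a n)
    (hy : IsRescaledSol W T γ a y) (hz : IsRescaledSol W T γ a z) (n : ℕ) :
    |(y 0 - y n) - (z 0 - z n)| ≤ 1 := by
  set m := ⌈y 0 - z 0⌉
  have hm := Int.le_ceil (y 0 - z 0)
  have hm' := Int.ceil_lt_add_one (y 0 - z 0)
  have hle := le_of_initial_le hγ ha hy (hz.add_int hWper m) (by linarith) n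
  have hge := le_of_initial_le hγ ha (hz.add_int hWper (m - 1)) hy (by push_cast; linarith) n
  push_cast at hle hge
  rw [abs_le]
  constructor <;> linarith

theorem tendsto_div_of_tendsto {ι : Type*} {l : Filter ι} (hWper : Function.Periodic W 1)
    (hγ : 0 < γ) (ha : ∀ n, 0 < a n) (hz : IsRescaledSol W T γ a z) {f : ℝ}
    (hzf : Tendsto (fun n : ℕ => (z 0 - z n) / n) atTop (𝓝 f)) {y : ι → ℕ → ℝ}
    (hy : ∀ k, IsRescaledSol W T γ a (y k)) {n : ι → ℕ} (hn : Tendsto n l atTop) :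
    Tendsto (fun k => (y k 0 - y k (n k)) / n k) l (𝓝 f) := by
  have hdiff : Tendsto (fun k => ((y k 0 - y k (n k)) - (z 0 - z (n k))) / n k) l (𝓝 0) := by
    refine squeeze_zero_norm (fun k => ?_) (tendsto_one_div_atTop_nhds_zero_nat.comp hn)
    rw [Real.norm_eq_abs, abs_div, Nat.abs_cast]
    exact div_le_div_of_nonneg_right ((hy k).abs_sub_sub_le_one hWper hγ ha hz _) (n k).cast_nonneg
  simpa [sub_div] using (hzf.comp hn).add hdiff

end IsRescaledSol

section TimeGrid

variable {ι : Type*} {l : Filter ι} {τ : ι → ℝ} {t : ℝ}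

theorem tendsto_natCeil_div_atTop (ht : 0 < t) (hτ : ∀ k, 0 < τ k) (hτ0 : Tendsto τ l (𝓝 0)) :
    Tendsto (fun k => ⌈t / τ k⌉₊) l atTop := by
  have hτ0' : Tendsto τ l (𝓝[>] 0) :=
    tendsto_nhdsWithin_iff.2 ⟨hτ0, Eventually.of_forall hτ⟩
  simpa only [div_eq_mul_inv, Function.comp_def, Pi.inv_apply] using
    tendsto_nat_ceil_atTop.comp (hτ0'.inv_tendsto_nhdsGT_zero.const_mul_atTop ht)

theorem tendsto_mul_natCeil_div (ht : 0 ≤ t) (hτ : ∀ k, 0 < τ k) (hτ0 : Tendsto τ l (𝓝 0)) :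
    Tendsto (fun k => τ k * ⌈t / τ k⌉₊) l (𝓝 t) := by
  refine tendsto_of_tendsto_of_tendsto_of_le_of_le tendsto_const_nhds
    (by simpa using tendsto_const_nhds.add hτ0 : Tendsto (fun k => t + τ k) l (𝓝 t))
    (fun k => ?_) (fun k => ?_)
  · simpa [mul_comm, div_le_iff₀ (hτ k)] using Nat.le_ceil (t / τ k)
  · calc τ k * ⌈t / τ k⌉₊ ≤ τ k * (t / τ k + 1) :=
          mul_le_mul_of_nonneg_left (Nat.ceil_lt_add_one (div_nonneg ht (hτ k).le)).le (hτ k).le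
      _ = t + τ k := by field_simp [(hτ k).ne']

end TimeGrid

def IsWigglySol (W : ℝ → ℝ) (T γ : ℝ) (a : ℕ → ℝ) (τ : ℝ) (u : ℕ → ℝ) : Prop :=
  ∀ n : ℕ, 1 ≤ n →
    (∀ v : ℝ, γ * τ * W (u n / (γ * τ)) + T * u n + a n * (u n - u (n - 1)) ^ 2 / (2 * τ) ≤
      γ * τ * W (v / (γ * τ)) + T * v + a n * (v - u (n - 1)) ^ 2 / (2 * τ)) ∧
    (∀ v : ℝ, (∀ w : ℝ, γ * τ * W (v / (γ * τ)) + T * v + a n * (v - u (n - 1)) ^ 2 / (2 * τ) ≤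
      γ * τ * W (w / (γ * τ)) + T * w + a n * (w - u (n - 1)) ^ 2 / (2 * τ)) → v = u n)

theorem IsWigglySol.isRescaledSol_div {W : ℝ → ℝ} {T γ τ : ℝ} {a : ℕ → ℝ} {u : ℕ → ℝ}
    (hγ : 0 < γ) (hτ : 0 < τ) (hu : IsWigglySol W T γ a τ u) :
    IsRescaledSol W T γ a (fun n => u n / (γ * τ)) := by
  have hε : 0 < γ * τ := mul_pos hγ hτ
  intro n hn
  obtain ⟨hmin, huniq⟩ := hu n hn
  have hscale := forall_le_iff_of_eq_mul_comp_div
    (E := fun v => γ * τ * W (v / (γ * τ)) + T * v + a n * (v - u (n - 1)) ^ 2 / (2 * τ))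
    (G := fun s => W s + T * s + a n * (γ / 2) * (s - u (n - 1) / (γ * τ)) ^ 2) hε
    fun x => by field_simp
  refine ⟨(hscale _).1 hmin, fun t ht => ?_⟩
  have := huniq (γ * τ * t) ((hscale _).2 (by rwa [mul_div_cancel_left₀ _ hε.ne']))
  simp only [← this, mul_div_cancel_left₀ _ hε.ne']

theorem stmt_14_general (W : ℝ → ℝ)
    (hWper : Function.Periodic W 1)
    (γ T : ℝ) (hγ : 0 < γ)
    (a : ℕ → ℝ) (ha : ∀ n, 0 < a n)
    (fγ : ℝ)
    (hfγ : ∀ y : ℕ → ℝ, IsRescaledSol W T γ a y →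
      Tendsto (fun n : ℕ => (y 0 - y n) / (n : ℝ)) atTop (nhds fγ))
    (τ : ℕ → ℝ) (hτpos : ∀ k, 0 < τ k) (hτ0 : Tendsto τ atTop (nhds 0))
    (u : ℕ → ℕ → ℝ) (u₀ : ℝ)
    (hu0 : Tendsto (fun k => u k 0) atTop (nhds u₀))
    (hmin : ∀ k : ℕ, ∀ n : ℕ, 1 ≤ n → ∀ v : ℝ,
      γ * τ k * W (u k n / (γ * τ k)) + T * u k n
          + a n * (u k n - u k (n - 1)) ^ 2 / (2 * τ k) ≤
        γ * τ k * W (v / (γ * τ k)) + T * v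
          + a n * (v - u k (n - 1)) ^ 2 / (2 * τ k))
    (huniq : ∀ k : ℕ, ∀ n : ℕ, 1 ≤ n → ∀ v : ℝ,
      (∀ w : ℝ, γ * τ k * W (v / (γ * τ k)) + T * v
          + a n * (v - u k (n - 1)) ^ 2 / (2 * τ k) ≤
        γ * τ k * W (w / (γ * τ k)) + T * w
          + a n * (w - u k (n - 1)) ^ 2 / (2 * τ k)) → v = u k n)
    (v : ℝ → ℝ)
    (hconv : ∀ t : ℝ, 0 ≤ t →
      Tendsto (fun k => u k ⌈t / τ k⌉₊) atTop (nhds (v t))) :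
    ∀ t : ℝ, 0 ≤ t → v t = u₀ - γ * fγ * t := by
  intro t ht
  set y := fun k n => u k n / (γ * τ k)
  have hy (k : ℕ) : IsRescaledSol W T γ a (y k) :=
    IsWigglySol.isRescaledSol_div hγ (hτpos k) fun n hn => ⟨hmin k n hn, huniq k n hn⟩
  rcases ht.eq_or_lt with rfl | ht
  · simpa using tendsto_nhds_unique (hconv 0 le_rfl) (by simpa using hu0)
  have hceil (k : ℕ) : (⌈t / τ k⌉₊ : ℝ) ≠ 0 := by positivity [div_pos ht (hτpos k)]
  have hratio := (hy 0).tendsto_div_of_tendsto hWper hγ ha (hfγ _ (hy 0)) hy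
    (tendsto_natCeil_div_atTop ht hτpos hτ0)
  have hlim := hu0.sub (((tendsto_mul_natCeil_div ht.le hτpos hτ0).const_mul γ).mul hratio)
  refine tendsto_nhds_unique (hconv t ht.le) (hlim.congr fun k => ?_) |>.trans (by ring)
  simp only [y]
  field_simp [hγ.ne', (hτpos k).ne', hceil k]
  ring

/-- In the critical regime `ε_k = γ τ_k`, any pointwise limit of the interpolated
perturbed discrete solutions for the wiggly energy is the linear motion
`u(t) = u₀ - γ f_γ(T,(a_n)) t`, where `f_γ(T,(a_n))` is the homogenized velocity
of the rescaled scheme. -/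
theorem stmt_14 (W : ℝ → ℝ)
    (hWC1 : ContDiff ℝ 1 W)
    (hWper : Function.Periodic W 1)
    (hWeven : ∀ s : ℝ, W (-s) = W s)
    (hWlip : ∃ L : NNReal, LipschitzWith L (deriv W))
    (hWnorm : sSup (Set.range fun s : ℝ => |deriv W s|) = 1)
    (hWavg : ∫ s in (0:ℝ)..1, W s = 0)
    (γ T : ℝ) (hγ : 0 < γ) (hT : 0 < T) (N : ℕ) (hN : 1 ≤ N)
    (a : ℕ → ℝ) (ha : ∀ n, 0 < a n) (haper : ∀ n : ℕ, a (n + N) = a n)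
    (fγ : ℝ)
    (hfγ : ∀ y : ℕ → ℝ, IsRescaledSol W T γ a y →
      Tendsto (fun n : ℕ => (y 0 - y n) / (n : ℝ)) atTop (nhds fγ))
    (τ : ℕ → ℝ) (hτpos : ∀ k, 0 < τ k) (hτ0 : Tendsto τ atTop (nhds 0))
    (u : ℕ → ℕ → ℝ) (u₀ : ℝ)
    (hu0 : Tendsto (fun k => u k 0) atTop (nhds u₀))
    (hmin : ∀ k : ℕ, ∀ n : ℕ, 1 ≤ n → ∀ v : ℝ,
      γ * τ k * W (u k n / (γ * τ k)) + T * u k n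
          + a n * (u k n - u k (n - 1)) ^ 2 / (2 * τ k) ≤
        γ * τ k * W (v / (γ * τ k)) + T * v
          + a n * (v - u k (n - 1)) ^ 2 / (2 * τ k))
    (huniq : ∀ k : ℕ, ∀ n : ℕ, 1 ≤ n → ∀ v : ℝ,
      (∀ w : ℝ, γ * τ k * W (v / (γ * τ k)) + T * v
          + a n * (v - u k (n - 1)) ^ 2 / (2 * τ k) ≤
        γ * τ k * W (w / (γ * τ k)) + T * w
          + a n * (w - u k (n - 1)) ^ 2 / (2 * τ k)) → v = u k n)
    (v : ℝ → ℝ)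
    (hconv : ∀ t : ℝ, 0 ≤ t →
      Tendsto (fun k => u k ⌈t / τ k⌉₊) atTop (nhds (v t))) :
    ∀ t : ℝ, 0 ≤ t → v t = u₀ - γ * fγ * t :=
  stmt_14_general W hWper γ T hγ a ha fγ hfγ τ hτpos hτ0 u u₀ hu0 hmin huniq v hconv
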